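/- In the formal power series ring in t over 𝒰_q^+, the following four identities hold: 𝒢̃(t)·𝒲₀ = (q⁻²·𝒲₀ + q⁻¹(q−q⁻¹)·E⁻(qξt))·𝒢̃(t); 𝒢̃(t)·𝒲₁ = (q²·𝒲₁ − q(q−q⁻¹)·E⁺(q⁻¹ξt))·𝒢̃(t); 𝒲₀·𝒢̃(t) = 𝒢̃(t)·(q²·𝒲₀ − q(q−q⁻¹)·E⁻(q⁻¹ξt)); 𝒲₁·𝒢̃(t) = 𝒢̃(t)·(q⁻²·𝒲₁ + q⁻¹(q−q⁻¹)·E⁺(qξt)). -/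

import Mathlib

noncomputable section

/-- The commutator `[X,Y] = XY - YX`. -/
def br {A : Type*} [Ring A] (X Y : A) : A := X * Y - Y * X

/-- The `q`-commutator `[X,Y]_q = q·XY - q⁻¹·YX`. -/
def qbr {F : Type*} [Field F] (q : F) {A : Type*} [Ring A] [Algebra F A] (X Y : A) : A :=
  q • (X * Y) - q⁻¹ • (Y * X)

/-- The element `E_δ = q⁻² W₁ W₀ - W₀ W₁`. -/
def Edel {F : Type*} [Field F] (q : F) {A : Type*} [Ring A] [Algebra F A] (W0 W1 : A) : A :=
  (q ^ 2)⁻¹ • (W1 * W0) - W0 * W1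

/-- The elements `E_{nδ+α₀}`. -/
def Em {F : Type*} [Field F] (q : F) {A : Type*} [Ring A] [Algebra F A] (W0 W1 : A) : ℕ → A
  | 0 => W0
  | n + 1 => (q + q⁻¹)⁻¹ • br (Edel q W0 W1) (Em q W0 W1 n)

/-- The elements `E_{nδ+α₁}`. -/
def Ep {F : Type*} [Field F] (q : F) {A : Type*} [Ring A] [Algebra F A] (W0 W1 : A) : ℕ → A
  | 0 => W1
  | n + 1 => (q + q⁻¹)⁻¹ • br (Ep q W0 W1 n) (Edel q W0 W1)

/-- The elements `E_{nδ}` (with `E_{0δ} = -(q-q⁻¹)⁻¹`). -/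
def Ed {F : Type*} [Field F] (q : F) {A : Type*} [Ring A] [Algebra F A] (W0 W1 : A) : ℕ → A
  | 0 => (-(q - q⁻¹)⁻¹) • (1 : A)
  | n + 1 => (q ^ 2)⁻¹ • (Ep q W0 W1 n * W0) - W0 * Ep q W0 W1 n

/-- The generating function with coefficients `a n`. -/
def ser {A : Type*} [Ring A] (a : ℕ → A) : PowerSeries A := PowerSeries.mk a

/-- The rescaled generating function `a(ct)`. -/
def serc {F : Type*} [Field F] {A : Type*} [Ring A] [Algebra F A] (c : F) (a : ℕ → A) :
    PowerSeries A := PowerSeries.mk fun n => c ^ n • a n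

/-- The generating function `a(s)` in the first variable `s`. -/
def serS {A : Type*} [Ring A] (a : ℕ → A) : PowerSeries (PowerSeries A) :=
  (PowerSeries.C : PowerSeries A →+* PowerSeries (PowerSeries A)) (PowerSeries.mk a)

/-- The generating function `a(t)` in the second variable `t`. -/
def serT {A : Type*} [Ring A] (a : ℕ → A) : PowerSeries (PowerSeries A) :=
  PowerSeries.mk fun n => (PowerSeries.C : A →+* PowerSeries A) (a n)

/-- The rescaled generating function `a(ct)` in the second variable `t`. -/
def serTc {F : Type*} [Field F] {A : Type*} [Ring A] [Algebra F A] (c : F) (a : ℕ → A) :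
    PowerSeries (PowerSeries A) := PowerSeries.mk fun n => (PowerSeries.C : A →+* PowerSeries A) (c ^ n • a n)

/-- The variable `s` viewed in the two-variable power series ring. -/
def sVar (A : Type*) [Ring A] : PowerSeries (PowerSeries A) :=
  (PowerSeries.C : PowerSeries A →+* PowerSeries (PowerSeries A)) PowerSeries.X

/-- The variable `t` viewed in the two-variable power series ring. -/
def tVar (A : Type*) [Ring A] : PowerSeries (PowerSeries A) := PowerSeries.X

/-- Elements of an `F`-algebra satisfying the defining relations of the alternating
central extension `𝒰_q^+`.  Here `Wm k = 𝒲_{-k}`, `Wp k = 𝒲_{k+1}`, `G k = 𝒢_k`,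
`Gt k = 𝒢̃_k` (with `𝒢₀ = 𝒢̃₀ = 1`). -/
structure AltData (F : Type*) [Field F] (q : F) (A : Type*) [Ring A] [Algebra F A] where
  Wm : ℕ → A
  Wp : ℕ → A
  G : ℕ → A
  Gt : ℕ → A
  hG0 : G 0 = 1
  hGt0 : Gt 0 = 1
  rel1 : ∀ k : ℕ, br (Wm 0) (Wp k) = (1 - (q ^ 2)⁻¹) • (Gt (k + 1) - G (k + 1))
  rel2 : ∀ k : ℕ, br (Wm k) (Wp 0) = (1 - (q ^ 2)⁻¹) • (Gt (k + 1) - G (k + 1))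
  rel3 : ∀ k : ℕ, qbr q (Wm 0) (G (k + 1)) = (q - q⁻¹) • Wm (k + 1)
  rel4 : ∀ k : ℕ, qbr q (Gt (k + 1)) (Wm 0) = (q - q⁻¹) • Wm (k + 1)
  rel5 : ∀ k : ℕ, qbr q (G (k + 1)) (Wp 0) = (q - q⁻¹) • Wp (k + 1)
  rel6 : ∀ k : ℕ, qbr q (Wp 0) (Gt (k + 1)) = (q - q⁻¹) • Wp (k + 1)
  rel7 : ∀ k l : ℕ, br (Wm k) (Wm l) = 0
  rel8 : ∀ k l : ℕ, br (Wp k) (Wp l) = 0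
  rel9 : ∀ k l : ℕ, br (Wm k) (Wp l) + br (Wp k) (Wm l) = 0
  rel10 : ∀ k l : ℕ, br (Wm k) (G (l + 1)) + br (G (k + 1)) (Wm l) = 0
  rel11 : ∀ k l : ℕ, br (Wm k) (Gt (l + 1)) + br (Gt (k + 1)) (Wm l) = 0
  rel12 : ∀ k l : ℕ, br (Wp k) (G (l + 1)) + br (G (k + 1)) (Wp l) = 0
  rel13 : ∀ k l : ℕ, br (Wp k) (Gt (l + 1)) + br (Gt (k + 1)) (Wp l) = 0
  rel14 : ∀ k l : ℕ, br (G (k + 1)) (G (l + 1)) = 0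
  rel15 : ∀ k l : ℕ, br (Gt (k + 1)) (Gt (l + 1)) = 0
  rel16 : ∀ k l : ℕ, br (Gt (k + 1)) (G (l + 1)) + br (G (k + 1)) (Gt (l + 1)) = 0

/-- The scalar `ξ = -q²(q-q⁻¹)⁻²`. -/
def xi {F : Type*} [Field F] (q : F) : F := -(q ^ 2) * ((q - q⁻¹)⁻¹) ^ 2

/-- The central elements `𝒵ⁿ∨` (with `𝒵₀∨ = 1`). -/
def Zv {F : Type*} [Field F] (q : F) {A : Type*} [Ring A] [Algebra F A]
    (D : AltData F q A) (n : ℕ) : A :=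
  (∑ k ∈ Finset.range (n + 1), (q ^ ((n : ℤ) - 2 * (k : ℤ))) • (D.G k * D.Gt (n - k))) -
    q • ∑ k ∈ Finset.range n, (q ^ ((n : ℤ) - 1 - 2 * (k : ℤ))) • (D.Wm k * D.Wp (n - 1 - k))

/-!
In `𝒰_q^+` the element `E_δ` commutes with every `𝒢̃_m`, and its bracket with `𝒲_{-n}`
(resp. `𝒲_{n+1}`) is a scalar multiple of `𝒢̃_{n+1}𝒲₀ - 𝒲_{-n-1}` (resp. `𝒲_{n+2} - 𝒢̃_{n+1}𝒲₁`).
Since the `E_{nδ+αᵢ}` are iterated brackets with `E_δ`, induction on `n` gives the factorisations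
`E⁻(qξt)𝒢̃(t) = 𝒢̃(t)E⁻(q⁻¹ξt) = 𝒲⁻(t)` and `E⁺(q⁻¹ξt)𝒢̃(t) = 𝒢̃(t)E⁺(qξt) = 𝒲⁺(t)`.
The `q`-commutator relations between `𝒲₀, 𝒲₁` and the `𝒢̃_{k+1}` say
`𝒲₀𝒢̃(t) = q²𝒢̃(t)𝒲₀ - q(q - q⁻¹)𝒲⁻(t)` and `𝒲₁𝒢̃(t) = q⁻²𝒢̃(t)𝒲₁ + q⁻¹(q - q⁻¹)𝒲⁺(t)`;
substituting the factorisations gives the four identities.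
-/

namespace PowerSeries

variable {R : Type*} [Ring R] {e g w : ℕ → R}

theorem mk_mul_mk_eq_of_br (Δ : R) (hΔ : ∀ m, Commute Δ (g m)) (hg0 : g 0 = 1)
    (he0 : e 0 = w 0) (he : ∀ n, e (n + 1) = br Δ (e n))
    (hw : ∀ n, w (n + 1) = w 0 * g (n + 1) + br Δ (w n)) :
    mk e * mk g = mk w := by
  ext n
  simp only [coeff_mul, coeff_mk]
  induction n with
  | zero => simp [hg0, he0]
  | succ n ih =>
    rw [Finset.Nat.sum_antidiagonal_succ, hw, he0, ← ih]
    simp only [he, br, sub_mul, Finset.sum_sub_distrib, Finset.mul_sum, Finset.sum_mul,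
      mul_assoc, (hΔ _).eq]

theorem mk_mul_mk_eq_of_br' (Δ : R) (hΔ : ∀ m, Commute Δ (g m)) (hg0 : g 0 = 1)
    (he0 : e 0 = w 0) (he : ∀ n, e (n + 1) = br Δ (e n))
    (hw : ∀ n, w (n + 1) = g (n + 1) * w 0 + br Δ (w n)) :
    mk g * mk e = mk w := by
  ext n
  simp only [coeff_mul, coeff_mk]
  induction n with
  | zero => simp [hg0, he0]
  | succ n ih =>
    rw [Finset.Nat.sum_antidiagonal_succ', hw, he0, ← ih]
    simp only [he, br, mul_sub, Finset.sum_sub_distrib, Finset.mul_sum, Finset.sum_mul,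
      ← mul_assoc, (hΔ _).eq]

end PowerSeries

theorem br_swap {A : Type*} [Ring A] (x y : A) : br x y = -br y x := by
  simp only [br, neg_sub]

section Scalars

variable {F : Type*} [Field F] {A : Type*} [Ring A] [Algebra F A]

theorem smul_br (a : F) (x y : A) : br (a • x) y = a • br x y := by
  simp only [br, smul_mul_assoc, mul_smul_comm, smul_sub]

theorem br_smul (a : F) (x y : A) : br x (a • y) = a • br x y := by
  simp only [br, smul_mul_assoc, mul_smul_comm, smul_sub]

theorem mul_eq_of_qbr_eq {q : F} {x y z : A} (hq0 : q ≠ 0) (h : qbr q x y = z) :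
    x * y = (q ^ 2)⁻¹ • (y * x) + q⁻¹ • z := by
  rw [← h, qbr, smul_sub, smul_smul, smul_smul, inv_mul_cancel₀ hq0, one_smul, ← mul_inv, ← sq]
  abel

theorem mul_rev_eq_of_qbr_eq {q : F} {x y z : A} (hq0 : q ≠ 0) (h : qbr q x y = z) :
    y * x = q ^ 2 • (x * y) - q • z := by
  rw [← h, qbr, smul_sub, smul_smul, smul_smul, mul_inv_cancel₀ hq0, one_smul, ← sq]
  abel

end Scalars

namespace AltData

variable {F : Type*} [Field F] {q : F} {A : Type*} [Ring A] [Algebra F A] (D : AltData F q A)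

theorem Wm_zero_mul_Gt (hq0 : q ≠ 0) (m : ℕ) :
    D.Wm 0 * D.Gt m = q ^ 2 • (D.Gt m * D.Wm 0) - (q * (q - q⁻¹)) • D.Wm m := by
  cases m with
  | zero =>
    rw [D.hGt0, one_mul, mul_one, ← sub_smul]
    have h1 : q ^ 2 - q * (q - q⁻¹) = 1 := by field_simp; ring
    rw [h1, one_smul]
  | succ k =>
    rw [mul_rev_eq_of_qbr_eq hq0 (D.rel4 k), smul_smul]

theorem Wp_zero_mul_Gt (hq0 : q ≠ 0) (m : ℕ) :
    D.Wp 0 * D.Gt m = (q ^ 2)⁻¹ • (D.Gt m * D.Wp 0) + (q⁻¹ * (q - q⁻¹)) • D.Wp m := by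
  cases m with
  | zero =>
    rw [D.hGt0, one_mul, mul_one, ← add_smul]
    have h1 : (q ^ 2)⁻¹ + q⁻¹ * (q - q⁻¹) = 1 := by field_simp; ring
    rw [h1, one_smul]
  | succ k =>
    rw [mul_eq_of_qbr_eq hq0 (D.rel6 k), smul_smul]

theorem Wm_zero_mul_G_succ (hq0 : q ≠ 0) (k : ℕ) :
    D.Wm 0 * D.G (k + 1) =
      (q ^ 2)⁻¹ • (D.G (k + 1) * D.Wm 0) + (q⁻¹ * (q - q⁻¹)) • D.Wm (k + 1) := by
  rw [mul_eq_of_qbr_eq hq0 (D.rel3 k), smul_smul]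

theorem Wp_zero_mul_G_succ (hq0 : q ≠ 0) (k : ℕ) :
    D.Wp 0 * D.G (k + 1) = q ^ 2 • (D.G (k + 1) * D.Wp 0) - (q * (q - q⁻¹)) • D.Wp (k + 1) := by
  rw [mul_rev_eq_of_qbr_eq hq0 (D.rel5 k), smul_smul]

theorem commute_Wm_zero (n : ℕ) : Commute (D.Wm 0) (D.Wm n) :=
  sub_eq_zero.mp (D.rel7 0 n)

theorem commute_Wp_zero (n : ℕ) : Commute (D.Wp 0) (D.Wp n) :=
  sub_eq_zero.mp (D.rel8 0 n)

theorem Wm_zero_mul_Wp (n : ℕ) :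
    D.Wm 0 * D.Wp n = D.Wp n * D.Wm 0 + (1 - (q ^ 2)⁻¹) • (D.Gt (n + 1) - D.G (n + 1)) := by
  rw [← D.rel1 n, br]; abel

theorem Wp_zero_mul_Wm (n : ℕ) :
    D.Wp 0 * D.Wm n = D.Wm n * D.Wp 0 - (1 - (q ^ 2)⁻¹) • (D.Gt (n + 1) - D.G (n + 1)) := by
  rw [← D.rel2 n, br]; abel

theorem commute_Edel_Gt (hq0 : q ≠ 0) (m : ℕ) :
    Commute (Edel q (D.Wm 0) (D.Wp 0)) (D.Gt m) := by
  have hYX : D.Wp 0 * D.Wm 0 * D.Gt m = D.Gt m * (D.Wp 0 * D.Wm 0) +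
      (q ^ 2 - 1) • (D.Wp m * D.Wm 0 - D.Wp 0 * D.Wm m) := by
    rw [mul_assoc, D.Wm_zero_mul_Gt hq0, mul_sub, mul_smul_comm, mul_smul_comm, ← mul_assoc,
      D.Wp_zero_mul_Gt hq0]
    simp only [add_mul, smul_mul_assoc, mul_assoc]
    match_scalars <;> field_simp
  have hXY : D.Wm 0 * D.Wp 0 * D.Gt m = D.Gt m * (D.Wm 0 * D.Wp 0) +
      (1 - (q ^ 2)⁻¹) • (D.Wm 0 * D.Wp m - D.Wm m * D.Wp 0) := by
    rw [mul_assoc, D.Wp_zero_mul_Gt hq0, mul_add, mul_smul_comm, mul_smul_comm, ← mul_assoc,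
      D.Wm_zero_mul_Gt hq0]
    simp only [sub_mul, smul_mul_assoc, mul_assoc]
    match_scalars <;> field_simp
  have h9 := D.rel9 m 0
  rw [br, br] at h9
  rw [Commute, SemiconjBy, Edel, sub_mul, mul_sub, smul_mul_assoc, mul_smul_comm, hYX, hXY]
  linear_combination (norm := skip) (1 - (q ^ 2)⁻¹) • h9
  simp only [smul_add, smul_sub, smul_smul]
  match_scalars <;> field_simp <;> ring

theorem br_Edel_Wm (hq0 : q ≠ 0) (n : ℕ) :
    br (Edel q (D.Wm 0) (D.Wp 0)) (D.Wm n) =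
      ((1 - (q ^ 2)⁻¹) * (q ^ 2 - (q ^ 2)⁻¹)) • (D.Gt (n + 1) * D.Wm 0 - D.Wm (n + 1)) := by
  have hYX : D.Wp 0 * D.Wm 0 * D.Wm n = D.Wm n * (D.Wp 0 * D.Wm 0) -
      (1 - (q ^ 2)⁻¹) • ((D.Gt (n + 1) - D.G (n + 1)) * D.Wm 0) := by
    rw [mul_assoc, (D.commute_Wm_zero n).eq, ← mul_assoc, D.Wp_zero_mul_Wm, sub_mul,
      smul_mul_assoc, mul_assoc]
  have hXY : D.Wm 0 * D.Wp 0 * D.Wm n = D.Wm n * (D.Wm 0 * D.Wp 0) -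
      (1 - (q ^ 2)⁻¹) • (D.Wm 0 * (D.Gt (n + 1) - D.G (n + 1))) := by
    rw [mul_assoc, D.Wp_zero_mul_Wm, mul_sub, ← mul_assoc, (D.commute_Wm_zero n).eq, mul_assoc,
      mul_smul_comm]
  rw [br, Edel, sub_mul, mul_sub, smul_mul_assoc, mul_smul_comm, hYX, hXY, mul_sub,
    D.Wm_zero_mul_Gt hq0, D.Wm_zero_mul_G_succ hq0]
  simp only [sub_mul, smul_sub, smul_add, smul_smul]
  match_scalars <;> field_simp <;> ring

theorem br_Edel_Wp (hq0 : q ≠ 0) (n : ℕ) :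
    br (Edel q (D.Wm 0) (D.Wp 0)) (D.Wp n) =
      ((1 - (q ^ 2)⁻¹) * (q ^ 2 - (q ^ 2)⁻¹) * (q ^ 2)⁻¹) •
        (D.Wp (n + 1) - D.Gt (n + 1) * D.Wp 0) := by
  have hYX : D.Wp 0 * D.Wm 0 * D.Wp n = D.Wp n * (D.Wp 0 * D.Wm 0) +
      (1 - (q ^ 2)⁻¹) • (D.Wp 0 * (D.Gt (n + 1) - D.G (n + 1))) := by
    rw [mul_assoc, D.Wm_zero_mul_Wp, mul_add, ← mul_assoc, (D.commute_Wp_zero n).eq, mul_assoc,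
      mul_smul_comm]
  have hXY : D.Wm 0 * D.Wp 0 * D.Wp n = D.Wp n * (D.Wm 0 * D.Wp 0) +
      (1 - (q ^ 2)⁻¹) • ((D.Gt (n + 1) - D.G (n + 1)) * D.Wp 0) := by
    rw [mul_assoc, (D.commute_Wp_zero n).eq, ← mul_assoc, D.Wm_zero_mul_Wp, add_mul,
      smul_mul_assoc, mul_assoc]
  rw [br, Edel, sub_mul, mul_sub, smul_mul_assoc, mul_smul_comm, hYX, hXY, mul_sub,
    D.Wp_zero_mul_Gt hq0, D.Wp_zero_mul_G_succ hq0]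
  simp only [sub_mul, smul_sub, smul_add, smul_smul]
  match_scalars <;> field_simp <;> ring

/- `ξ` is the scalar with `ξ (1 - q⁻²)(q² - q⁻²) = -q (q + q⁻¹)`; this is what makes the bracket
with the rescaled `E_δ` send `𝒲_{-n}` to `𝒲_{-n-1}` (resp. `𝒲_{n+1}` to `𝒲_{n+2}`). -/
theorem serc_Em_mul_ser_Gt (hq0 : q ≠ 0) (hq2 : q ^ 2 ≠ 1) (hq2' : q ^ 2 + 1 ≠ 0) :
    serc (q * xi q) (Em q (D.Wm 0) (D.Wp 0)) * ser D.Gt = ser D.Wm := by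
  refine PowerSeries.mk_mul_mk_eq_of_br ((q * xi q * (q + q⁻¹)⁻¹) • Edel q (D.Wm 0) (D.Wp 0))
    (fun m => (D.commute_Edel_Gt hq0 m).smul_left _) D.hGt0 (by simp [Em]) (fun n => ?_)
    (fun n => ?_)
  · simp only [Em, smul_br, br_smul, smul_smul]
    congr 1; ring
  · rw [smul_br, D.br_Edel_Wm hq0, D.Wm_zero_mul_Gt hq0]
    simp only [smul_sub, smul_smul]
    match_scalars <;> simp only [xi] <;> field_simp <;> ring

theorem ser_Gt_mul_serc_Em (hq0 : q ≠ 0) (hq2 : q ^ 2 ≠ 1) (hq2' : q ^ 2 + 1 ≠ 0) :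
    ser D.Gt * serc (q⁻¹ * xi q) (Em q (D.Wm 0) (D.Wp 0)) = ser D.Wm := by
  refine PowerSeries.mk_mul_mk_eq_of_br' ((q⁻¹ * xi q * (q + q⁻¹)⁻¹) • Edel q (D.Wm 0) (D.Wp 0))
    (fun m => (D.commute_Edel_Gt hq0 m).smul_left _) D.hGt0 (by simp [Em]) (fun n => ?_)
    (fun n => ?_)
  · simp only [Em, smul_br, br_smul, smul_smul]
    congr 1; ring
  · rw [smul_br, D.br_Edel_Wm hq0]
    simp only [smul_sub, smul_smul]
    match_scalars <;> simp only [xi] <;> field_simp <;> ring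

theorem serc_Ep_mul_ser_Gt (hq0 : q ≠ 0) (hq2 : q ^ 2 ≠ 1) (hq2' : q ^ 2 + 1 ≠ 0) :
    serc (q⁻¹ * xi q) (Ep q (D.Wm 0) (D.Wp 0)) * ser D.Gt = ser D.Wp := by
  refine PowerSeries.mk_mul_mk_eq_of_br
    (-(q⁻¹ * xi q * (q + q⁻¹)⁻¹) • Edel q (D.Wm 0) (D.Wp 0))
    (fun m => (D.commute_Edel_Gt hq0 m).smul_left _) D.hGt0 (by simp [Ep]) (fun n => ?_)
    (fun n => ?_)
  · rw [Ep, br_swap]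
    simp only [smul_br, br_smul, smul_neg, smul_smul, ← neg_smul]
    congr 1; ring
  · rw [smul_br, D.br_Edel_Wp hq0, D.Wp_zero_mul_Gt hq0]
    simp only [smul_sub, smul_smul]
    match_scalars <;> simp only [xi] <;> field_simp <;> ring

theorem ser_Gt_mul_serc_Ep (hq0 : q ≠ 0) (hq2 : q ^ 2 ≠ 1) (hq2' : q ^ 2 + 1 ≠ 0) :
    ser D.Gt * serc (q * xi q) (Ep q (D.Wm 0) (D.Wp 0)) = ser D.Wp := by
  refine PowerSeries.mk_mul_mk_eq_of_br'
    (-(q * xi q * (q + q⁻¹)⁻¹) • Edel q (D.Wm 0) (D.Wp 0))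
    (fun m => (D.commute_Edel_Gt hq0 m).smul_left _) D.hGt0 (by simp [Ep]) (fun n => ?_)
    (fun n => ?_)
  · rw [Ep, br_swap]
    simp only [smul_br, br_smul, smul_neg, smul_smul, ← neg_smul]
    congr 1; ring
  · rw [smul_br, D.br_Edel_Wp hq0]
    simp only [smul_sub, smul_smul]
    match_scalars <;> simp only [xi] <;> field_simp <;> ring

theorem C_Wm_zero_mul_ser_Gt (hq0 : q ≠ 0) :
    PowerSeries.C (D.Wm 0) * ser D.Gt =
      q ^ 2 • (ser D.Gt * PowerSeries.C (D.Wm 0)) - (q * (q - q⁻¹)) • ser D.Wm := by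
  ext n
  simp [ser, PowerSeries.coeff_C_mul, PowerSeries.coeff_mul_C, D.Wm_zero_mul_Gt hq0]

theorem C_Wp_zero_mul_ser_Gt (hq0 : q ≠ 0) :
    PowerSeries.C (D.Wp 0) * ser D.Gt =
      (q ^ 2)⁻¹ • (ser D.Gt * PowerSeries.C (D.Wp 0)) + (q⁻¹ * (q - q⁻¹)) • ser D.Wp := by
  ext n
  simp [ser, PowerSeries.coeff_C_mul, PowerSeries.coeff_mul_C, D.Wp_zero_mul_Gt hq0]

end AltData

/-- four identities relating `𝒢̃(t)` with `𝒲₀`, `𝒲₁` and the rescaled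
series `E⁻`, `E⁺`, in the power series ring in `t` over `𝒰_q^+`. -/
theorem stmt11 {F : Type*} [Field F] (q : F) (hq0 : q ≠ 0)
    (hq : ∀ n : ℕ, 0 < n → q ^ n ≠ 1)
    {A : Type*} [Ring A] [Algebra F A] (D : AltData F q A) :
    ser D.Gt * (PowerSeries.C : A →+* PowerSeries A) (D.Wm 0) =
        ((q ^ 2)⁻¹ • (PowerSeries.C : A →+* PowerSeries A) (D.Wm 0) +
          (q⁻¹ * (q - q⁻¹)) • serc (q * xi q) (Em q (D.Wm 0) (D.Wp 0))) * ser D.Gt ∧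
    ser D.Gt * (PowerSeries.C : A →+* PowerSeries A) (D.Wp 0) =
        (q ^ 2 • (PowerSeries.C : A →+* PowerSeries A) (D.Wp 0) -
          (q * (q - q⁻¹)) • serc (q⁻¹ * xi q) (Ep q (D.Wm 0) (D.Wp 0))) * ser D.Gt ∧
    (PowerSeries.C : A →+* PowerSeries A) (D.Wm 0) * ser D.Gt =
        ser D.Gt * (q ^ 2 • (PowerSeries.C : A →+* PowerSeries A) (D.Wm 0) -
          (q * (q - q⁻¹)) • serc (q⁻¹ * xi q) (Em q (D.Wm 0) (D.Wp 0))) ∧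
    (PowerSeries.C : A →+* PowerSeries A) (D.Wp 0) * ser D.Gt =
        ser D.Gt * ((q ^ 2)⁻¹ • (PowerSeries.C : A →+* PowerSeries A) (D.Wp 0) +
          (q⁻¹ * (q - q⁻¹)) • serc (q * xi q) (Ep q (D.Wm 0) (D.Wp 0))) := by
  have hq2 : q ^ 2 ≠ 1 := hq 2 two_pos
  have hq2' : q ^ 2 + 1 ≠ 0 := fun h => hq 4 four_pos (by linear_combination (q ^ 2 - 1) * h)
  refine ⟨?_, ?_, ?_, ?_⟩
  · rw [add_mul, smul_mul_assoc, smul_mul_assoc, D.serc_Em_mul_ser_Gt hq0 hq2 hq2',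
      D.C_Wm_zero_mul_ser_Gt hq0]
    simp only [smul_sub, smul_smul]
    match_scalars <;> field_simp
    ring
  · rw [sub_mul, smul_mul_assoc, smul_mul_assoc, D.serc_Ep_mul_ser_Gt hq0 hq2 hq2',
      D.C_Wp_zero_mul_ser_Gt hq0]
    simp only [smul_add, smul_smul]
    match_scalars <;> field_simp
    ring
  · rw [mul_sub, mul_smul_comm, mul_smul_comm, D.ser_Gt_mul_serc_Em hq0 hq2 hq2',
      D.C_Wm_zero_mul_ser_Gt hq0]
  · rw [mul_add, mul_smul_comm, mul_smul_comm, D.ser_Gt_mul_serc_Ep hq0 hq2 hq2',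
      D.C_Wp_zero_mul_ser_Gt hq0]
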